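/- arXiv:2207.06533 — 2 statements merged into one kernel-verified Lean document; each statement's English description precedes it below -/
import Mathlib

section
/- Let F_old = 1/4 + (F_new − 1/4) e^{−t_cut/τ} and F_worst = (1/4)[1 + (4F_old − 1)^{n−1} / 3^{n−2}]. If t_cut ≤ −τ ln( (3/(4F_new − 1)) · ((4F_min − 1)/3)^{1/(n−1)} ), with 1/4 < F_min ≤ F_new ≤ 1, τ > 0, n ≥ 2, then F_worst ≥ F_min. -/
/-- If the cutoff time satisfies
`t_cut ≤ -τ ln( (3/(4F_new - 1)) ((4F_min - 1)/3)^{1/(n-1)} )`,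
then the worst-case end-to-end fidelity
`F_worst = (1/4)[1 + (4F_old - 1)^{n-1}/3^{n-2}]`, where
`F_old = 1/4 + (F_new - 1/4) e^{-t_cut/τ}`, satisfies `F_worst ≥ F_min`. -/
theorem cutoff_condition_implies_min_fidelity (n : ℕ) (hn : 2 ≤ n)
    (τ Fnew Fmin tcut : ℝ) (hτ : 0 < τ)
    (hFmin : 1 / 4 < Fmin) (hFminFnew : Fmin ≤ Fnew) (hFnew : Fnew ≤ 1)
    (htcut0 : 0 ≤ tcut)
    (hcut : tcut ≤ -τ * Real.log ((3 / (4 * Fnew - 1)) *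
      ((4 * Fmin - 1) / 3) ^ ((1 : ℝ) / (n - 1)))) :
    Fmin ≤ (1 / 4) * (1 +
      (4 * (1 / 4 + (Fnew - 1 / 4) * Real.exp (-tcut / τ)) - 1) ^ (n - 1) / 3 ^ (n - 2)) := by
  set x := Real.exp (-tcut / τ) with hx
  have hFnewpos : (0:ℝ) < 4 * Fnew - 1 := by linarith
  have hbpos : (0:ℝ) < (4 * Fmin - 1) / 3 := by linarith
  set e := (1 : ℝ) / (n - 1) with he
  have hCpos : (0:ℝ) < (3 / (4 * Fnew - 1)) * ((4 * Fmin - 1) / 3) ^ e :=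
    mul_pos (by positivity) (Real.rpow_pos_of_pos hbpos e)
  -- x ≥ C
  have hlog : Real.log ((3 / (4 * Fnew - 1)) * ((4 * Fmin - 1) / 3) ^ e) ≤ -tcut / τ := by
    rw [le_div_iff₀ hτ]
    nlinarith [hcut]
  have hxC : (3 / (4 * Fnew - 1)) * ((4 * Fmin - 1) / 3) ^ e ≤ x := by
    calc (3 / (4 * Fnew - 1)) * ((4 * Fmin - 1) / 3) ^ e
        = Real.exp (Real.log ((3 / (4 * Fnew - 1)) * ((4 * Fmin - 1) / 3) ^ e)) :=
          (Real.exp_log hCpos).symm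
      _ ≤ x := Real.exp_le_exp.mpr hlog
  have hA : 3 * ((4 * Fmin - 1) / 3) ^ e ≤ (4 * Fnew - 1) * x := by
    have := mul_le_mul_of_nonneg_left hxC (le_of_lt hFnewpos)
    calc 3 * ((4 * Fmin - 1) / 3) ^ e
        = (4 * Fnew - 1) * ((3 / (4 * Fnew - 1)) * ((4 * Fmin - 1) / 3) ^ e) := by
          field_simp
      _ ≤ (4 * Fnew - 1) * x := this
  have hApos : (0:ℝ) < 3 * ((4 * Fmin - 1) / 3) ^ e := by
    positivity
  have hn1 : (1:ℕ) ≤ n - 1 := by omega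
  have hcast : ((n - 1 : ℕ) : ℝ) = (n : ℝ) - 1 := by
    push_cast [Nat.cast_sub (by omega : 1 ≤ n)]; ring
  have hne : (n : ℝ) - 1 ≠ 0 := by
    have : (2:ℝ) ≤ n := by exact_mod_cast hn
    linarith
  have hkey : (3 * ((4 * Fmin - 1) / 3) ^ e) ^ (n - 1) = 3 ^ (n - 2) * (4 * Fmin - 1) := by
    rw [mul_pow]
    have : (((4 * Fmin - 1) / 3) ^ e) ^ (n - 1) = (4 * Fmin - 1) / 3 := by
      rw [← Real.rpow_natCast (((4 * Fmin - 1) / 3) ^ e) (n - 1),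
        ← Real.rpow_mul (le_of_lt hbpos), hcast, he]
      rw [one_div, inv_mul_cancel₀ hne, Real.rpow_one]
    rw [this]
    have h3 : (3:ℝ) ^ (n - 1) = 3 ^ (n - 2) * 3 := by
      rw [← pow_succ]
      congr 1
      omega
    rw [h3]
    field_simp
  have hpow : 3 ^ (n - 2) * (4 * Fmin - 1) ≤ ((4 * Fnew - 1) * x) ^ (n - 1) := by
    rw [← hkey]
    exact pow_le_pow_left₀ (le_of_lt hApos) hA _
  have h3pos : (0:ℝ) < 3 ^ (n - 2) := by positivity
  have heq : 4 * (1 / 4 + (Fnew - 1 / 4) * x) - 1 = (4 * Fnew - 1) * x := by ring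
  rw [heq]
  have : 4 * Fmin - 1 ≤ ((4 * Fnew - 1) * x) ^ (n - 1) / 3 ^ (n - 2) := by
    rw [le_div_iff₀ h3pos]
    nlinarith [hpow]
  nlinarith [this]
end

section
/- Let D_t(F) = 1/4 + (F − 1/4) e^{−t/τ} and S(F1,F2) = F1 F2 + (1−F1)(1−F2)/3, with F1, F2 ≥ 1/4 and t ≥ 0. Then D_t(S(D_s(F1), D_s(F2))) is non-increasing in s ∈ [0, t]: among all strategies that wait a total time t and perform one swap at an intermediate time s, the final fidelity is maximized by swapping immediately (s = 0). -/
/-- With decay `D_t(F) = 1/4 + (F - 1/4)e^{-t/τ}` and swap `S(F₁,F₂) = F₁F₂ + (1-F₁)(1-F₂)/3`,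
for `F₁, F₂ ≥ 1/4` the final fidelity `D_{t}(S(D_s(F₁), D_s(F₂)))` of wait-`s`-swap-wait-`t`
strategies is non-increasing in the intermediate swap time `s ∈ [0, t]`: swapping
immediately (`s = 0`) is optimal. -/
theorem swap_early_optimal (τ : ℝ) (hτ : 0 < τ)
    (D : ℝ → ℝ → ℝ) (hD : ∀ t F, D t F = 1 / 4 + (F - 1 / 4) * Real.exp (-t / τ))
    (S : ℝ → ℝ → ℝ) (hS : ∀ F1 F2, S F1 F2 = F1 * F2 + (1 - F1) * (1 - F2) / 3)
    (F1 F2 : ℝ) (hF1 : 1 / 4 ≤ F1) (hF2 : 1 / 4 ≤ F2) (t : ℝ) (ht : 0 ≤ t) :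
    ∀ s₁ s₂ : ℝ, 0 ≤ s₁ → s₁ ≤ s₂ → s₂ ≤ t →
      D t (S (D s₂ F1) (D s₂ F2)) ≤ D t (S (D s₁ F1) (D s₁ F2)) := by
  intro s₁ s₂ h1 h12 h2t
  simp only [hD, hS]
  have he : Real.exp (-s₂ / τ) ≤ Real.exp (-s₁ / τ) := by
    apply Real.exp_le_exp.2
    exact (div_le_div_iff_of_pos_right hτ).2 (by linarith)
  have h1p : (0:ℝ) < Real.exp (-s₁ / τ) := Real.exp_pos _
  have h2p : (0:ℝ) < Real.exp (-s₂ / τ) := Real.exp_pos _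
  have htp : (0:ℝ) < Real.exp (-t / τ) := Real.exp_pos _
  have hab : 0 ≤ (F1 - 1/4) * (F2 - 1/4) := mul_nonneg (by linarith) (by linarith)
  nlinarith [mul_le_mul he he h2p.le h1p.le, mul_nonneg hab htp.le,
    mul_le_mul_of_nonneg_left (mul_le_mul he he h2p.le h1p.le) (mul_nonneg hab htp.le)]
end
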